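/- arXiv:2211.03301 — 4 statements merged into one kernel-verified Lean document; each statement's English description precedes it below -/
import Mathlib

section
/- For α, β > 0 and vectors a_1, ..., a_N (N ≥ 2) in an inner product space: ∑_{i=1}^N ‖a_i‖² ≥ (1/(αN + (N−2)β)) · [ (2β/(N(N−1)))·(∑_{1≤i<j≤N} ‖a_i + a_j‖)² + α·∑_{1≤i<j≤N} ‖a_i − a_j‖² + (α−β)·‖∑_{i=1}^N a_i‖² ]. -/
/-!
With `S = ∑ ‖aᵢ‖²`, expanding `‖aᵢ ± aⱼ‖²` into inner products gives
`∑_{i<j} ‖aᵢ - aⱼ‖² = N S - ‖∑ aᵢ‖²` and `∑_{i<j} ‖aᵢ + aⱼ‖² = (N - 2) S + ‖∑ aᵢ‖²`.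
Cauchy–Schwarz over the `N (N - 1) / 2` pairs bounds `(∑_{i<j} ‖aᵢ + aⱼ‖)²` by
`N (N - 1) / 2` times the second sum, and then the bracket is at most `(α N + (N - 2) β) S`.
-/

open Finset

section PairSums

variable {ι M : Type*} [Fintype ι] [LinearOrder ι] [AddCommMonoid M]

theorem two_nsmul_sum_pairs_add_sum_diag (f : ι → ι → M) (hf : ∀ i j, f i j = f j i) :
    2 • ∑ i, ∑ j ∈ univ.filter (i < ·), f i j + ∑ i, f i i = ∑ i, ∑ j, f i j := by
  have hrow : ∀ i, ∑ j, f i j =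
      ∑ j ∈ univ.filter (i < ·), f i j + (∑ j ∈ univ.filter (· < i), f i j + f i i) := by
    intro i
    rw [← sum_filter_add_sum_filter_not univ (i < ·)]
    congr 1
    have : univ.filter (fun j => ¬ i < j) = insert i (univ.filter (· < i)) := by
      ext j; simp [le_iff_lt_or_eq, eq_comm, or_comm]
    rw [this, sum_insert (by simp), add_comm]
  have hlower :
      ∑ i, ∑ j ∈ univ.filter (· < i), f i j = ∑ i, ∑ j ∈ univ.filter (i < ·), f i j := by
    rw [sum_comm' (t' := univ) (s' := fun j => univ.filter (j < ·)) (by simp)]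
    simp_rw [hf]
  simp only [hrow, sum_add_distrib, hlower, two_nsmul, add_assoc]

end PairSums

theorem sum_sum_re_inner {𝕜 V ι : Type*} [RCLike 𝕜] [NormedAddCommGroup V]
    [InnerProductSpace 𝕜 V] [Fintype ι] (a : ι → V) :
    ∑ i, ∑ j, RCLike.re (inner 𝕜 (a i) (a j)) = ‖∑ i, a i‖ ^ 2 := by
  simp_rw [norm_sq_eq_re_inner (𝕜 := 𝕜), sum_inner, inner_sum, map_sum]

theorem sum_sum_norm_sub_sq {𝕜 V ι : Type*} [RCLike 𝕜] [NormedAddCommGroup V]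
    [InnerProductSpace 𝕜 V] [Fintype ι] (a : ι → V) :
    ∑ i, ∑ j, ‖a i - a j‖ ^ 2 = 2 * Fintype.card ι * ∑ i, ‖a i‖ ^ 2 - 2 * ‖∑ i, a i‖ ^ 2 := by
  simp_rw [norm_sub_sq (𝕜 := 𝕜), sum_add_distrib, sum_sub_distrib, ← mul_sum,
    sum_sum_re_inner (𝕜 := 𝕜), sum_const, card_univ, nsmul_eq_mul, ← mul_sum]
  ring

theorem sum_sum_norm_add_sq {𝕜 V ι : Type*} [RCLike 𝕜] [NormedAddCommGroup V]
    [InnerProductSpace 𝕜 V] [Fintype ι] (a : ι → V) :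
    ∑ i, ∑ j, ‖a i + a j‖ ^ 2 = 2 * Fintype.card ι * ∑ i, ‖a i‖ ^ 2 + 2 * ‖∑ i, a i‖ ^ 2 := by
  simp_rw [norm_add_sq (𝕜 := 𝕜), sum_add_distrib, ← mul_sum,
    sum_sum_re_inner (𝕜 := 𝕜), sum_const, card_univ, nsmul_eq_mul, ← mul_sum]
  ring

theorem sq_sum_sum_le_sum_card_mul_sum_sum_sq {ι κ : Type*} (s : Finset ι) (t : ι → Finset κ)
    (g : ι → κ → ℝ) :
    (∑ i ∈ s, ∑ j ∈ t i, g i j) ^ 2 ≤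
      (∑ i ∈ s, (#(t i) : ℝ)) * ∑ i ∈ s, ∑ j ∈ t i, g i j ^ 2 := by
  rw [sum_sigma' s t, sum_sigma' s t, ← Nat.cast_sum, ← card_sigma]
  exact sq_sum_le_card_mul_sum_sq

theorem sum_pairs_norm_sub_sq {𝕜 V ι : Type*} [RCLike 𝕜] [NormedAddCommGroup V]
    [InnerProductSpace 𝕜 V] [Fintype ι] [LinearOrder ι] (a : ι → V) :
    ∑ i, ∑ j ∈ univ.filter (i < ·), ‖a i - a j‖ ^ 2 =
      Fintype.card ι * ∑ i, ‖a i‖ ^ 2 - ‖∑ i, a i‖ ^ 2 := by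
  have h := two_nsmul_sum_pairs_add_sum_diag (fun i j => ‖a i - a j‖ ^ 2)
    fun i j => by rw [norm_sub_rev]
  simp only [sub_self, norm_zero, zero_pow two_ne_zero, sum_const_zero, add_zero,
    sum_sum_norm_sub_sq (𝕜 := 𝕜), nsmul_eq_mul, Nat.cast_ofNat] at h
  linarith

theorem sum_pairs_norm_add_sq {𝕜 V ι : Type*} [RCLike 𝕜] [NormedAddCommGroup V]
    [InnerProductSpace 𝕜 V] [Fintype ι] [LinearOrder ι] (a : ι → V) :
    ∑ i, ∑ j ∈ univ.filter (i < ·), ‖a i + a j‖ ^ 2 =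
      (Fintype.card ι - 2) * ∑ i, ‖a i‖ ^ 2 + ‖∑ i, a i‖ ^ 2 := by
  have h := two_nsmul_sum_pairs_add_sum_diag (fun i j => ‖a i + a j‖ ^ 2)
    fun i j => by rw [add_comm]
  have hdiag : ∀ i, ‖a i + a i‖ ^ 2 = 4 * ‖a i‖ ^ 2 := fun i => by
    rw [norm_add_sq (𝕜 := 𝕜), inner_self_eq_norm_sq]; ring
  simp only [hdiag, ← mul_sum, sum_sum_norm_add_sq (𝕜 := 𝕜), nsmul_eq_mul, Nat.cast_ofNat] at h
  linarith

theorem sum_card_filter_lt {ι : Type*} [Fintype ι] [LinearOrder ι] :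
    ∑ i : ι, (#(univ.filter (i < ·)) : ℝ) = Fintype.card ι * (Fintype.card ι - 1) / 2 := by
  have h := two_nsmul_sum_pairs_add_sum_diag (M := ℝ) (ι := ι) (fun _ _ => 1) fun _ _ => rfl
  simp only [sum_const, nsmul_eq_mul, mul_one, Nat.cast_ofNat, card_univ] at h
  linarith

theorem weighted_norm_ineq_X {𝕜 V : Type*} [RCLike 𝕜] [NormedAddCommGroup V]
    [InnerProductSpace 𝕜 V] (N : ℕ) (hN : 2 ≤ N) (a : Fin N → V)
    (α β : ℝ) (hα : 0 < α) (hβ : 0 < β) :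
    ∑ i, ‖a i‖ ^ 2 ≥
      (1 / (α * N + ((N : ℝ) - 2) * β)) *
        ((2 * β / ((N : ℝ) * ((N : ℝ) - 1))) *
          (∑ i : Fin N, ∑ j ∈ univ.filter (fun j => i < j), ‖a i + a j‖) ^ 2 +
         α * (∑ i : Fin N, ∑ j ∈ univ.filter (fun j => i < j), ‖a i - a j‖ ^ 2) +
         (α - β) * ‖∑ i, a i‖ ^ 2) := by
  have hN2 : (2 : ℝ) ≤ N := by exact_mod_cast hN
  have hpairs : 0 < (N : ℝ) * (N - 1) := by nlinarith
  have hsub := sum_pairs_norm_sub_sq (𝕜 := 𝕜) a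
  have hadd := sum_pairs_norm_add_sq (𝕜 := 𝕜) a
  have hcard := sum_card_filter_lt (ι := Fin N)
  have hCS := sq_sum_sum_le_sum_card_mul_sum_sum_sq univ (fun i : Fin N => univ.filter (i < ·))
    fun i j => ‖a i + a j‖
  simp only [Fintype.card_fin] at hsub hadd hcard
  have hD : 0 < α * N + ((N : ℝ) - 2) * β := by nlinarith
  have hplus : 2 * β / (N * (N - 1)) * (∑ i : Fin N, ∑ j ∈ univ.filter (i < ·), ‖a i + a j‖) ^ 2
      ≤ β * ((N - 2) * ∑ i, ‖a i‖ ^ 2 + ‖∑ i, a i‖ ^ 2) := by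
    rw [div_mul_eq_mul_div, div_le_iff₀ hpairs]
    rw [hadd, hcard] at hCS
    nlinarith [mul_le_mul_of_nonneg_left hCS hβ.le]
  rw [ge_iff_le, one_div, inv_mul_le_iff₀ hD, hsub]
  linarith
end

section
/- For α, β > 0 and vectors a_1, ..., a_N (N ≥ 2) in an inner product space: ∑_{i=1}^N ‖a_i‖² ≥ (1/(αN + (N−2)β)) · [ β·∑_{1≤i<j≤N} ‖a_i + a_j‖² + (2α/(N(N−1)))·(∑_{1≤i<j≤N} ‖a_i − a_j‖)² + (α−β)·‖∑_{i=1}^N a_i‖² ]. -/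
/-!
With `S = ∑ ‖a i‖²` and `T = ‖∑ a i‖²`, sums over the pairs `i < j` satisfy Lagrange's identity
`∑ ‖a i - a j‖² = N S - T` and, by the parallelogram law, `∑ ‖a i + a j‖² = (N - 2) S + T`.
Cauchy–Schwarz over the `N (N - 1) / 2` pairs gives
`(∑ ‖a i - a j‖)² ≤ N (N - 1) / 2 · ∑ ‖a i - a j‖²`, so the bracket is at most
`β ((N - 2) S + T) + α (N S - T) + (α - β) T = (α N + (N - 2) β) S`.
-/

open Finset

section Pairs

variable {ι : Type*} [Fintype ι] [LinearOrder ι]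

theorem sum_filter_lt_add_swap_add_sum_diag {M : Type*} [AddCommMonoid M] (F : ι → ι → M) :
    ∑ i, ∑ j ∈ univ.filter (fun j => i < j), (F i j + F j i) + ∑ i, F i i =
      ∑ i, ∑ j, F i j := by
  have hswap : ∑ i, ∑ j ∈ univ.filter (fun j => i < j), F j i =
      ∑ i, ∑ j ∈ univ.filter (fun j => j < i), F i j :=
    sum_comm' (by simp)
  have hrow : ∀ i, ∑ j ∈ univ.filter (fun j => i < j), F i j +
      ∑ j ∈ univ.filter (fun j => j < i), F i j + F i i = ∑ j, F i j := by
    intro i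
    rw [sum_filter, sum_filter, ← sum_ite_eq_of_mem' univ i (F i) (mem_univ i),
      ← sum_add_distrib, ← sum_add_distrib]
    refine sum_congr rfl fun j _ => ?_
    rcases lt_trichotomy i j with h | rfl | h
    · simp [h, h.not_gt, h.ne']
    · simp
    · simp [h, h.not_gt, h.ne]
  simp only [sum_add_distrib, hswap, ← hrow]

theorem sum_filter_lt_add {R : Type*} [CommRing R] (f : ι → R) :
    ∑ i, ∑ j ∈ univ.filter (fun j => i < j), (f i + f j) =
      ((Fintype.card ι : R) - 1) * ∑ i, f i := by
  have h := sum_filter_lt_add_swap_add_sum_diag (fun i (_ : ι) => f i)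
  simp only [sum_const, card_univ, nsmul_eq_mul, ← mul_sum] at h
  linear_combination h

theorem sq_sum_filter_lt_le (g : ι → ι → ℝ) :
    (∑ i, ∑ j ∈ univ.filter (fun j => i < j), g i j) ^ 2 ≤
      (Fintype.card ι * (Fintype.card ι - 1) / 2) *
        ∑ i, ∑ j ∈ univ.filter (fun j => i < j), g i j ^ 2 := by
  have hcard : ∑ i : ι, ∑ j ∈ univ.filter (fun j => i < j), (1 : ℝ) =
      Fintype.card ι * (Fintype.card ι - 1) / 2 := by
    have h := sum_filter_lt_add (fun _ : ι => (1 : ℝ))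
    have hN : ∑ _i : ι, (1 : ℝ) = Fintype.card ι := by simp
    simp only [sum_add_distrib, hN] at h
    linear_combination h / 2
  rw [← hcard]
  simp only [sum_sigma']
  rw [sum_const, nsmul_one]
  exact sq_sum_le_card_mul_sum_sq

end Pairs

section InnerProduct

open RCLike

theorem norm_sum_sq_eq_sum_sum_re_inner {𝕜 E ι : Type*} [RCLike 𝕜] [NormedAddCommGroup E]
    [InnerProductSpace 𝕜 E] [Fintype ι] (a : ι → E) :
    ‖∑ i, a i‖ ^ 2 = ∑ i, ∑ j, re (inner 𝕜 (a i) (a j)) := by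
  simp only [← inner_self_eq_norm_sq (𝕜 := 𝕜), sum_inner, inner_sum, map_sum]
  exact sum_comm

variable {E ι : Type*} [NormedAddCommGroup E] [Fintype ι] [LinearOrder ι]

theorem sum_filter_lt_norm_sub_sq (𝕜 : Type*) [RCLike 𝕜] [InnerProductSpace 𝕜 E]
    (a : ι → E) :
    ∑ i, ∑ j ∈ univ.filter (fun j => i < j), ‖a i - a j‖ ^ 2 =
      Fintype.card ι * ∑ i, ‖a i‖ ^ 2 - ‖∑ i, a i‖ ^ 2 := by
  have hsym := sum_filter_lt_add_swap_add_sum_diag (fun i j => ‖a i - a j‖ ^ 2)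
  simp only [norm_sub_rev (a _) (a _), ← two_mul, ← mul_sum, sub_self, norm_zero,
    zero_pow two_ne_zero, sum_const_zero, add_zero] at hsym
  have hall : ∑ i, ∑ j, ‖a i - a j‖ ^ 2 =
      2 * (Fintype.card ι * ∑ i, ‖a i‖ ^ 2) - 2 * ‖∑ i, a i‖ ^ 2 := by
    simp only [norm_sub_sq (𝕜 := 𝕜), sum_add_distrib, sum_sub_distrib, ← mul_sum, sum_const,
      card_univ, nsmul_eq_mul, norm_sum_sq_eq_sum_sum_re_inner (𝕜 := 𝕜)]
    ring
  linear_combination (hsym.trans hall) / 2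

theorem sum_filter_lt_norm_add_sq (𝕜 : Type*) [RCLike 𝕜] [InnerProductSpace 𝕜 E]
    (a : ι → E) :
    ∑ i, ∑ j ∈ univ.filter (fun j => i < j), ‖a i + a j‖ ^ 2 =
      (Fintype.card ι - 2) * ∑ i, ‖a i‖ ^ 2 + ‖∑ i, a i‖ ^ 2 := by
  have hpar (x y : E) : ‖x + y‖ ^ 2 = 2 * (‖x‖ ^ 2 + ‖y‖ ^ 2) - ‖x - y‖ ^ 2 := by
    linear_combination parallelogram_law_with_norm 𝕜 x y
  simp only [hpar, sum_sub_distrib, ← mul_sum, sum_filter_lt_add, sum_filter_lt_norm_sub_sq 𝕜]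
  ring

end InnerProduct

theorem weighted_norm_ineq_Y {𝕜 V : Type*} [RCLike 𝕜] [NormedAddCommGroup V]
    [InnerProductSpace 𝕜 V] (N : ℕ) (hN : 2 ≤ N) (a : Fin N → V)
    (α β : ℝ) (hα : 0 < α) (hβ : 0 < β) :
    ∑ i, ‖a i‖ ^ 2 ≥
      (1 / (α * N + ((N : ℝ) - 2) * β)) *
        (β * (∑ i : Fin N, ∑ j ∈ univ.filter (fun j => i < j), ‖a i + a j‖ ^ 2) +
         (2 * α / ((N : ℝ) * ((N : ℝ) - 1))) *
          (∑ i : Fin N, ∑ j ∈ univ.filter (fun j => i < j), ‖a i - a j‖) ^ 2 +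
         (α - β) * ‖∑ i, a i‖ ^ 2) := by
  have hN' : (2 : ℝ) ≤ N := by exact_mod_cast hN
  have hden : 0 < α * N + ((N : ℝ) - 2) * β := by nlinarith
  have hcoef : 0 ≤ 2 * α / (N * (N - 1)) := div_nonneg (by positivity) (by nlinarith)
  have hsum_add := sum_filter_lt_norm_add_sq 𝕜 a
  have hsum_sub := sum_filter_lt_norm_sub_sq 𝕜 a
  have hCS := sq_sum_filter_lt_le fun i j => ‖a i - a j‖
  rw [Fintype.card_fin] at hsum_add hsum_sub hCS
  rw [hsum_sub] at hCS
  set S := ∑ i, ‖a i‖ ^ 2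
  set T := ‖∑ i, a i‖ ^ 2
  have hdist : 2 * α / (N * (N - 1)) *
      (∑ i : Fin N, ∑ j ∈ univ.filter (fun j => i < j), ‖a i - a j‖) ^ 2 ≤ α * (N * S - T) :=
    calc _ ≤ 2 * α / (N * (N - 1)) * (N * (N - 1) / 2 * (N * S - T)) :=
          mul_le_mul_of_nonneg_left hCS hcoef
      _ = α * (N * S - T) := by field_simp [show (N : ℝ) - 1 ≠ 0 by linarith]
  rw [ge_iff_le, one_div, inv_mul_le_iff₀ hden, hsum_add]
  linear_combination hdist
end

section
/- For N ≥ 2 Hermitian observables A_1, ..., A_N and a density matrix ρ, and any α ≥ 0, x, y ∈ {0,1}: ∑_{i=1}^N Δ²_ρ(A_i) ≥ (1/((1+α²)(N−1))) · [ (2/(N(N−1)))·(∑_{1≤i<j≤N} Δ_ρ(α^{1−x} A_i + (−1)^y α^x A_j))² + ∑_{1≤i<j≤N} Δ²_ρ(α^x A_i + (−1)^{1−y} α^{1−x} A_j) ] (Theorem 1 of the paper). -/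
open Finset ComplexOrder

/-- Variance of an observable `M` in the state `ρ`. -/
noncomputable def qvar {d : ℕ} (ρ M : Matrix (Fin d) (Fin d) ℂ) : ℝ :=
  ((ρ * M ^ 2).trace - (ρ * M).trace ^ 2).re

/-- Standard deviation of an observable `M` in the state `ρ`. -/
noncomputable def qdev {d : ℕ} (ρ M : Matrix (Fin d) (Fin d) ℂ) : ℝ :=
  Real.sqrt (qvar ρ M)

/-!
For a pair `i < j` write `B = p A_i + q A_j` and `C = r A_i + s A_j`. In all four cases of `x, y`
the coefficient vectors `(p, r)` and `(q, s)` are orthogonal of squared length `1 + α²`, so the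
covariance terms cancel and `Δ²B + Δ²C = (1 + α²)(Δ²A_i + Δ²A_j)`. Summed over the pairs this gives
`(1 + α²)(N - 1) ∑ Δ²A_i`, and Cauchy–Schwarz over the `N(N - 1)/2` pairs bounds
`(∑ ΔB)²` by `N(N - 1)/2 · ∑ Δ²B`.
-/

section Variance

variable {d : ℕ}

/-- Twice the symmetrized covariance of `A` and `B` in the state `ρ`. -/
noncomputable def qcov2 (ρ A B : Matrix (Fin d) (Fin d) ℂ) : ℝ :=
  ((ρ * (A * B)).trace + (ρ * (B * A)).trace - 2 * (ρ * A).trace * (ρ * B).trace).re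

lemma qvar_smul_add_smul (ρ A B : Matrix (Fin d) (Fin d) ℂ) (p q : ℝ) :
    qvar ρ ((p : ℂ) • A + (q : ℂ) • B) =
      p ^ 2 * qvar ρ A + p * q * qcov2 ρ A B + q ^ 2 * qvar ρ B := by
  have h : (ρ * ((p : ℂ) • A + (q : ℂ) • B) ^ 2).trace - (ρ * ((p : ℂ) • A + (q : ℂ) • B)).trace ^ 2
      = (p : ℂ) ^ 2 * ((ρ * A ^ 2).trace - (ρ * A).trace ^ 2)
        + (p * q : ℝ) * ((ρ * (A * B)).trace + (ρ * (B * A)).trace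
          - 2 * (ρ * A).trace * (ρ * B).trace)
        + (q : ℂ) ^ 2 * ((ρ * B ^ 2).trace - (ρ * B).trace ^ 2) := by
    simp only [sq, Matrix.mul_add, Matrix.add_mul, Matrix.smul_mul, Matrix.mul_smul,
      Matrix.trace_add, Matrix.trace_smul, smul_eq_mul, Complex.ofReal_mul]
    ring
  simp only [qvar, qcov2, h, Complex.add_re, ← Complex.ofReal_pow, Complex.re_ofReal_mul]

lemma qvar_add_qvar_of_orthogonal (ρ A B : Matrix (Fin d) (Fin d) ℂ) {p q r s c : ℝ}
    (hpr : p ^ 2 + r ^ 2 = c) (hqs : q ^ 2 + s ^ 2 = c) (horth : p * q + r * s = 0) :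
    qvar ρ ((p : ℂ) • A + (q : ℂ) • B) + qvar ρ ((r : ℂ) • A + (s : ℂ) • B)
      = c * (qvar ρ A + qvar ρ B) := by
  rw [qvar_smul_add_smul, qvar_smul_add_smul]
  linear_combination qvar ρ A * hpr + qvar ρ B * hqs + qcov2 ρ A B * horth

/-- The variance is the expectation of `K²` for the centred observable `K = M - ⟨M⟩`. -/
lemma qvar_nonneg {ρ M : Matrix (Fin d) (Fin d) ℂ} (hρ : ρ.PosSemidef) (hρ1 : ρ.trace = 1)
    (hM : M.IsHermitian) : 0 ≤ qvar ρ M := by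
  set t := (ρ * M).trace
  have ht : star t = t := by
    rw [← Matrix.trace_conjTranspose, Matrix.conjTranspose_mul, hρ.isHermitian.eq, hM.eq,
      Matrix.trace_mul_comm]
  set K := M - t • (1 : Matrix (Fin d) (Fin d) ℂ)
  have hK : K.conjTranspose = K := by
    rw [Matrix.conjTranspose_sub, Matrix.conjTranspose_smul, hM.eq, ht, Matrix.conjTranspose_one]
  have hvar : qvar ρ M = (K.conjTranspose * ρ * K).trace.re := by
    have hexp : ρ * (K * K) = ρ * M ^ 2 - (2 * t) • (ρ * M) + (t * t) • ρ := by
      simp only [K, sq, Matrix.mul_sub, Matrix.sub_mul, Matrix.mul_smul, Matrix.smul_mul,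
        Matrix.mul_one, Matrix.one_mul, smul_smul, two_mul, add_smul, smul_sub]
      abel
    rw [hK, Matrix.mul_assoc, Matrix.trace_mul_comm, Matrix.mul_assoc, hexp]
    simp only [qvar, Matrix.trace_add, Matrix.trace_sub, Matrix.trace_smul, hρ1, smul_eq_mul,
      mul_one, t]
    ring_nf
  rw [hvar]
  exact (Complex.nonneg_iff.mp (hρ.conjTranspose_mul_mul_same K).trace_nonneg).1

lemma isHermitian_real_smul_add_smul {A B : Matrix (Fin d) (Fin d) ℂ} (hA : A.IsHermitian)
    (hB : B.IsHermitian) (p q : ℝ) : ((p : ℂ) • A + (q : ℂ) • B).IsHermitian :=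
  (hA.smul (Complex.conj_ofReal p)).add (hB.smul (Complex.conj_ofReal q))

lemma qdev_sq {ρ M : Matrix (Fin d) (Fin d) ℂ} (hρ : ρ.PosSemidef) (hρ1 : ρ.trace = 1)
    (hM : M.IsHermitian) : qdev ρ M ^ 2 = qvar ρ M :=
  Real.sq_sqrt (qvar_nonneg hρ hρ1 hM)

end Variance

section Pairs

variable {ι : Type*} [Fintype ι] [LinearOrder ι]

lemma card_filter_gt_add_card_filter_lt (i : ι) :
    #{j | i < j} + #{j | j < i} = Fintype.card ι - 1 := by
  rw [← card_union_of_disjoint (disjoint_filter.2 fun _ _ h h' => lt_asymm h h'), ← filter_or]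
  have : ({j | i < j ∨ j < i} : Finset ι) = univ.erase i := by
    ext j
    simp [ne_comm]
  rw [this, card_erase_of_mem (mem_univ i), card_univ]

lemma sum_pairs_add (f : ι → ℝ) :
    ∑ i, ∑ j ∈ univ.filter (fun j => i < j), (f i + f j)
      = ((Fintype.card ι : ℝ) - 1) * ∑ i, f i := by
  have hswap : ∑ i, ∑ j ∈ univ.filter (fun j => i < j), f j
      = ∑ j, ∑ i ∈ univ.filter (fun i => i < j), f j := by
    simp only [sum_filter]
    exact sum_comm
  rw [sum_congr rfl fun i _ => sum_add_distrib, sum_add_distrib, hswap, ← sum_add_distrib, mul_sum]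
  refine sum_congr rfl fun i _ => ?_
  rw [sum_const, sum_const, ← add_smul, card_filter_gt_add_card_filter_lt, nsmul_eq_mul,
    Nat.cast_sub (Fintype.card_pos_iff.2 ⟨i⟩)]
  ring

lemma card_pairs :
    (#(univ.sigma fun i : ι => univ.filter (fun j => i < j)) : ℝ)
      = (Fintype.card ι : ℝ) * ((Fintype.card ι : ℝ) - 1) / 2 := by
  have h := sum_pairs_add (fun _ : ι => (1 / 2 : ℝ))
  simp only [sum_sigma', card_eq_sum_ones, Nat.cast_sum, Nat.cast_one] at h ⊢
  norm_num at h ⊢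
  linarith

lemma sq_sum_pairs_le (f : ι → ι → ℝ) :
    (∑ i, ∑ j ∈ univ.filter (fun j => i < j), f i j) ^ 2
      ≤ ((Fintype.card ι : ℝ) * ((Fintype.card ι : ℝ) - 1) / 2) *
        ∑ i, ∑ j ∈ univ.filter (fun j => i < j), f i j ^ 2 := by
  rw [sum_sigma' (f := f), sum_sigma' (f := fun i j => f i j ^ 2), ← card_pairs]
  exact sq_sum_le_card_mul_sum_sq

end Pairs

theorem sum_qvar_ge_of_orthogonal {ι : Type*} [Fintype ι] [LinearOrder ι] {d : ℕ}
    (hι : 2 ≤ Fintype.card ι) {ρ : Matrix (Fin d) (Fin d) ℂ} (hρ : ρ.PosSemidef)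
    (hρ1 : ρ.trace = 1) {A : ι → Matrix (Fin d) (Fin d) ℂ} (hA : ∀ i, (A i).IsHermitian)
    {p q r s c : ℝ} (hc : 0 < c) (hpr : p ^ 2 + r ^ 2 = c) (hqs : q ^ 2 + s ^ 2 = c)
    (horth : p * q + r * s = 0) :
    ∑ i, qvar ρ (A i) ≥
      (1 / (c * ((Fintype.card ι : ℝ) - 1))) *
        ((2 / ((Fintype.card ι : ℝ) * ((Fintype.card ι : ℝ) - 1))) *
          (∑ i, ∑ j ∈ univ.filter (fun j => i < j), qdev ρ ((p : ℂ) • A i + (q : ℂ) • A j)) ^ 2 +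
         ∑ i, ∑ j ∈ univ.filter (fun j => i < j), qvar ρ ((r : ℂ) • A i + (s : ℂ) • A j)) := by
  have hn : (1 : ℝ) < Fintype.card ι := by exact_mod_cast hι
  set n : ℝ := (Fintype.card ι : ℝ)
  set P := ∑ i, ∑ j ∈ univ.filter (fun j => i < j), qvar ρ ((p : ℂ) • A i + (q : ℂ) • A j)
  set T := ∑ i, ∑ j ∈ univ.filter (fun j => i < j), qvar ρ ((r : ℂ) • A i + (s : ℂ) • A j)
  have hPT : P + T = c * (n - 1) * ∑ i, qvar ρ (A i) := by
    simp only [P, T, ← sum_add_distrib, qvar_add_qvar_of_orthogonal _ _ _ hpr hqs horth,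
      ← mul_sum, sum_pairs_add, n]
    ring
  have hCS : (2 / (n * (n - 1))) *
      (∑ i, ∑ j ∈ univ.filter (fun j => i < j), qdev ρ ((p : ℂ) • A i + (q : ℂ) • A j)) ^ 2 ≤ P := by
    have h := sq_sum_pairs_le fun i j => qdev ρ ((p : ℂ) • A i + (q : ℂ) • A j)
    simp only [qdev_sq hρ hρ1 (isHermitian_real_smul_add_smul (hA _) (hA _) p q)] at h
    rw [div_mul_eq_mul_div, div_le_iff₀ (by positivity)]
    linarith
  rw [ge_iff_le, one_div_mul_eq_div, div_le_iff₀' (by positivity), ← hPT]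
  linarith

theorem theorem1_general {d N : ℕ} (hN : 2 ≤ N) (ρ : Matrix (Fin d) (Fin d) ℂ)
    (hρ : ρ.PosSemidef) (hρ1 : ρ.trace = 1)
    (A : Fin N → Matrix (Fin d) (Fin d) ℂ) (hA : ∀ i, (A i).IsHermitian)
    (α : ℝ) (x y : ℕ) (hx : x ∈ ({0, 1} : Finset ℕ))
    (hy : y ∈ ({0, 1} : Finset ℕ)) :
    ∑ i, qvar ρ (A i) ≥
      (1 / ((1 + α ^ 2) * ((N : ℝ) - 1))) *
        ((2 / ((N : ℝ) * ((N : ℝ) - 1))) *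
          (∑ i : Fin N, ∑ j ∈ univ.filter (fun j => i < j),
            qdev ρ (((α : ℂ) ^ (1 - x)) • A i + ((-1 : ℂ) ^ y * (α : ℂ) ^ x) • A j)) ^ 2 +
         ∑ i : Fin N, ∑ j ∈ univ.filter (fun j => i < j),
            qvar ρ (((α : ℂ) ^ x) • A i + ((-1 : ℂ) ^ (1 - y) * (α : ℂ) ^ (1 - x)) • A j)) := by
  simp only [mem_insert, mem_singleton] at hx hy
  have hpr : (α ^ (1 - x)) ^ 2 + (α ^ x) ^ 2 = 1 + α ^ 2 := by
    rcases hx with rfl | rfl <;> ring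
  have hqs : ((-1) ^ y * α ^ x) ^ 2 + ((-1) ^ (1 - y) * α ^ (1 - x)) ^ 2 = 1 + α ^ 2 := by
    rcases hx with rfl | rfl <;> rcases hy with rfl | rfl <;> ring
  have horth : α ^ (1 - x) * ((-1) ^ y * α ^ x) + α ^ x * ((-1) ^ (1 - y) * α ^ (1 - x)) = 0 := by
    rcases hy with rfl | rfl <;> ring
  have h := sum_qvar_ge_of_orthogonal (by simpa using hN) hρ hρ1 hA (by positivity) hpr hqs horth
  push_cast [Fintype.card_fin] at h
  exact h

theorem theorem1 {d N : ℕ} (hN : 2 ≤ N) (ρ : Matrix (Fin d) (Fin d) ℂ)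
    (hρ : ρ.PosSemidef) (hρ1 : ρ.trace = 1)
    (A : Fin N → Matrix (Fin d) (Fin d) ℂ) (hA : ∀ i, (A i).IsHermitian)
    (α : ℝ) (hα : 0 ≤ α) (x y : ℕ) (hx : x ∈ ({0, 1} : Finset ℕ))
    (hy : y ∈ ({0, 1} : Finset ℕ)) :
    ∑ i, qvar ρ (A i) ≥
      (1 / ((1 + α ^ 2) * ((N : ℝ) - 1))) *
        ((2 / ((N : ℝ) * ((N : ℝ) - 1))) *
          (∑ i : Fin N, ∑ j ∈ univ.filter (fun j => i < j),
            qdev ρ (((α : ℂ) ^ (1 - x)) • A i + ((-1 : ℂ) ^ y * (α : ℂ) ^ x) • A j)) ^ 2 +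
         ∑ i : Fin N, ∑ j ∈ univ.filter (fun j => i < j),
            qvar ρ (((α : ℂ) ^ x) • A i + ((-1 : ℂ) ^ (1 - y) * (α : ℂ) ^ (1 - x)) • A j)) :=
  theorem1_general hN ρ hρ hρ1 A hA α x y hx hy
end

section
/- Let |ψ⟩ be a unit vector and A_1, ..., A_N Hermitian matrices, and suppose |ψ⟩ is not a common eigenvector of all A_i (i.e., there exists i such that A_i|ψ⟩ is not a scalar multiple of |ψ⟩). Then for any α > 0 the lower bound LB1 of Theorem 1 evaluated at the pure state ρ = |ψ⟩⟨ψ| is strictly positive; equivalently, ∑_{1≤i<j≤N} Δ²_ρ(A_i + α A_j) + ∑_{1≤i<j≤N} Δ²_ρ(αA_i − A_j) > 0. -/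
/-!
For a pure state the variance of a Hermitian `M` is `‖Mψ - ⟨ψ, Mψ⟩ψ‖²`, which is nonnegative
and vanishes exactly when `ψ` is an eigenvector of `M`. The matrices having `ψ` as an eigenvector
form a subspace, and since `1 + α² ≠ 0` both `A i` and `A j` are linear combinations of
`A i + α A j` and `α A i - A j`. Hence if `ψ` is not an eigenvector of `A i₀`, the pair formed
by `i₀` and any other index contributes a positive term to the sum.
-/

open Finset

open Matrix

lemma Submodule.mem_of_add_smul_mem_of_smul_sub_mem {K V : Type*} [Field K] [AddCommGroup V]
    [Module K V] (S : Submodule K V) {a : K} (ha : 1 + a ^ 2 ≠ 0) {x y : V} (h₁ : x + a • y ∈ S) (h₂ : a • x - y ∈ S) :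
    x ∈ S ∧ y ∈ S := by
  constructor
  · rw [← S.smul_mem_iff ha]
    convert S.add_mem h₁ (S.smul_mem a h₂) using 1
    module
  · rw [← S.smul_mem_iff ha]
    convert S.sub_mem (S.smul_mem a h₁) h₂ using 1
    module

lemma Matrix.IsHermitian.ofReal_smul {n : Type*} {M : Matrix n n ℂ} (hM : M.IsHermitian)
    (α : ℝ) : ((α : ℂ) • M).IsHermitian :=
  hM.smul (Complex.conj_ofReal α)

namespace Matrix

variable {n R : Type*} [Fintype n] [CommSemiring R]

def withEigenvector (v : n → R) : Submodule R (Matrix n n R) where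
  carrier := {M | ∃ c : R, M *ᵥ v = c • v}
  add_mem' := by
    rintro M N ⟨a, ha⟩ ⟨b, hb⟩
    exact ⟨a + b, by rw [add_mulVec, ha, hb, add_smul]⟩
  zero_mem' := ⟨0, by rw [zero_mulVec, zero_smul]⟩
  smul_mem' := by
    rintro r M ⟨a, ha⟩
    exact ⟨r * a, by rw [smul_mulVec, ha, smul_smul]⟩

lemma trace_vecMulVec_mul (v w : n → R) (M : Matrix n n R) :
    (vecMulVec v w * M).trace = w ⬝ᵥ M *ᵥ v := by
  rw [vecMulVec_mul, trace_vecMulVec, dotProduct_comm, dotProduct_mulVec]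

end Matrix

section PureState
variable {d : ℕ} {v : Fin d → ℂ} {M : Matrix (Fin d) (Fin d) ℂ}

lemma qvar_vecMulVec (hv : star v ⬝ᵥ v = 1) (hM : M.IsHermitian) :
    qvar (vecMulVec v (star v)) M =
      (star (M *ᵥ v - (star v ⬝ᵥ M *ᵥ v) • v) ⬝ᵥ (M *ᵥ v - (star v ⬝ᵥ M *ᵥ v) • v)).re := by
  set c := star v ⬝ᵥ M *ᵥ v
  have hMv : star (M *ᵥ v) = star v ᵥ* M := by rw [star_mulVec, hM.eq]
  have hc : star (M *ᵥ v) ⬝ᵥ v = c := by rw [hMv, ← dotProduct_mulVec]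
  have hc_star : star c = c := by
    conv_lhs => rw [← hc, star_dotProduct, star_star]
  have hM2 : star v ⬝ᵥ (M ^ 2) *ᵥ v = star (M *ᵥ v) ⬝ᵥ M *ᵥ v := by
    rw [pow_two, ← mulVec_mulVec, hMv, dotProduct_mulVec]
  unfold qvar
  rw [trace_vecMulVec_mul, trace_vecMulVec_mul, hM2, star_sub, star_smul, hc_star]
  simp only [sub_dotProduct, dotProduct_sub, smul_dotProduct, dotProduct_smul, hc, hv]
  congr 1
  simp only [smul_eq_mul]
  ring

open ComplexOrder in
lemma qvar_vecMulVec_nonneg (hv : star v ⬝ᵥ v = 1) (hM : M.IsHermitian) :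
    0 ≤ qvar (vecMulVec v (star v)) M := by
  rw [qvar_vecMulVec hv hM]
  exact (Complex.nonneg_iff.mp (dotProduct_star_self_nonneg _)).1

open ComplexOrder in
lemma qvar_vecMulVec_pos (hv : star v ⬝ᵥ v = 1) (hM : M.IsHermitian)
    (hMv : M ∉ withEigenvector v) : 0 < qvar (vecMulVec v (star v)) M := by
  rw [qvar_vecMulVec hv hM]
  refine (Complex.pos_iff.mp (dotProduct_star_self_pos_iff.mpr fun h => hMv ?_)).1
  exact ⟨_, sub_eq_zero.mp h⟩

lemma qvar_add_smul_add_qvar_smul_sub_pos (hv : star v ⬝ᵥ v = 1)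
    {X Y : Matrix (Fin d) (Fin d) ℂ} (hX : X.IsHermitian) (hY : Y.IsHermitian) (α : ℝ)
    (h : X ∉ withEigenvector v ∨ Y ∉ withEigenvector v) :
    0 < qvar (vecMulVec v (star v)) (X + (α : ℂ) • Y) +
      qvar (vecMulVec v (star v)) ((α : ℂ) • X - Y) := by
  have h₁ := hX.add (hY.ofReal_smul α)
  have h₂ := (hX.ofReal_smul α).sub hY
  have mem_of_le {Z : Matrix (Fin d) (Fin d) ℂ} (hZ : Z.IsHermitian)
      (hle : qvar (vecMulVec v (star v)) Z ≤ 0) : Z ∈ withEigenvector v := by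
    by_contra hZv
    exact (qvar_vecMulVec_pos hv hZ hZv).not_ge hle
  by_contra! hle
  have hmem := (withEigenvector v).mem_of_add_smul_mem_of_smul_sub_mem
    (a := (α : ℂ)) (by norm_cast; positivity)
    (mem_of_le h₁ (by linarith [qvar_vecMulVec_nonneg hv h₂]))
    (mem_of_le h₂ (by linarith [qvar_vecMulVec_nonneg hv h₁]))
  tauto

end PureState

lemma Finset.sum_sum_filter_lt_pos {ι : Type*} [Fintype ι] [LinearOrder ι] {f : ι → ι → ℝ}
    (hf : ∀ i j, 0 ≤ f i j) (h : ∃ i j, i < j ∧ 0 < f i j) :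
    0 < ∑ i, ∑ j ∈ univ.filter (fun j => i < j), f i j := by
  obtain ⟨i, j, hij, hpos⟩ := h
  refine sum_pos' (fun i _ => sum_nonneg fun j _ => hf i j) ⟨i, mem_univ i, ?_⟩
  exact sum_pos' (fun j _ => hf i j) ⟨j, by simpa using hij, hpos⟩

theorem lower_bound_pos_general {d N : ℕ} (hN : 2 ≤ N)
    (ψ : EuclideanSpace ℂ (Fin d)) (hψ : ‖ψ‖ = 1)
    (A : Fin N → Matrix (Fin d) (Fin d) ℂ) (hA : ∀ i, (A i).IsHermitian)
    (hcommon : ∃ i, ¬ ∃ c : ℂ, (A i).mulVec ψ = c • (ψ : Fin d → ℂ))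
    (α : ℝ) :
    0 < (∑ i : Fin N, ∑ j ∈ univ.filter (fun j => i < j),
          qvar (Matrix.of fun k l => ψ k * star (ψ l)) (A i + (α : ℂ) • A j)) +
        ∑ i : Fin N, ∑ j ∈ univ.filter (fun j => i < j),
          qvar (Matrix.of fun k l => ψ k * star (ψ l)) ((α : ℂ) • A i - A j) := by
  have hv : star (ψ : Fin d → ℂ) ⬝ᵥ ψ = 1 := by
    rw [dotProduct_comm, ← EuclideanSpace.inner_eq_star_dotProduct, inner_self_eq_norm_sq_to_K,
      hψ, RCLike.ofReal_one, one_pow]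
  obtain ⟨i₀, hi₀⟩ := hcommon
  have : Nontrivial (Fin N) := Fin.nontrivial_iff_two_le.mpr hN
  obtain ⟨j, hj⟩ := exists_ne i₀
  simp only [← sum_add_distrib]
  refine sum_sum_filter_lt_pos (fun i j => ?_) ?_
  · exact add_nonneg (qvar_vecMulVec_nonneg hv ((hA i).add ((hA j).ofReal_smul α)))
      (qvar_vecMulVec_nonneg hv (((hA i).ofReal_smul α).sub (hA j)))
  rcases hj.lt_or_gt with h | h
  · exact ⟨j, i₀, h, qvar_add_smul_add_qvar_smul_sub_pos hv (hA j) (hA i₀) α (.inr hi₀)⟩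
  · exact ⟨i₀, j, h, qvar_add_smul_add_qvar_smul_sub_pos hv (hA i₀) (hA j) α (.inl hi₀)⟩

theorem lower_bound_pos {d N : ℕ} (hN : 2 ≤ N)
    (ψ : EuclideanSpace ℂ (Fin d)) (hψ : ‖ψ‖ = 1)
    (A : Fin N → Matrix (Fin d) (Fin d) ℂ) (hA : ∀ i, (A i).IsHermitian)
    (hcommon : ∃ i, ¬ ∃ c : ℂ, (A i).mulVec ψ = c • (ψ : Fin d → ℂ))
    (α : ℝ) (hα : 0 < α) :
    0 < (∑ i : Fin N, ∑ j ∈ univ.filter (fun j => i < j),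
          qvar (Matrix.of fun k l => ψ k * star (ψ l)) (A i + (α : ℂ) • A j)) +
        ∑ i : Fin N, ∑ j ∈ univ.filter (fun j => i < j),
          qvar (Matrix.of fun k l => ψ k * star (ψ l)) ((α : ℂ) • A i - A j) :=
  lower_bound_pos_general hN ψ hψ A hA hcommon α
end
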